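/- Fix ω, η ∈ ℝ and ε ∈ {+1, −1}, and consider the constant Christoffel symbols on ℝ² given by Γ_{11}{}^1 = ω, Γ_{12}{}^2 = ω, Γ_{21}{}^2 = ω − 2, Γ_{22}{}^1 = ε, Γ_{22}{}^2 = η, and all other Γ_{ij}{}^k = 0. Then: (a) the Ricci tensor vanishes identically, ρ_{jk} = 0 for all j,k (in particular the Ricci tensor is parallel); (b) the torsion components are T¹ = 0, T² = 1; (c) the covariant derivative of the torsion satisfies T²{}_{;1} = −ω, T¹{}_{;2} = ε, and T¹{}_{;1} = T²{}_{;2} = 0; in particular the torsion is not parallel. -/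
import Mathlib


noncomputable section

open scoped BigOperators

/-- Curvature tensor of a Type 𝒜 connection (constant Christoffel symbols):
`R_{ijk}{}^l = Σ_m (Γ_{im}{}^l Γ_{jk}{}^m − Γ_{jm}{}^l Γ_{ik}{}^m)`. -/
def curvC (Γ : Fin 2 → Fin 2 → Fin 2 → ℝ) (i j k l : Fin 2) : ℝ :=
  ∑ m : Fin 2, (Γ i m l * Γ j k m - Γ j m l * Γ i k m)

/-- Ricci tensor `ρ_{jk} = R_{1jk}{}^1 + R_{2jk}{}^2`. -/
def ricciC (Γ : Fin 2 → Fin 2 → Fin 2 → ℝ) (j k : Fin 2) : ℝ :=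
  curvC Γ 0 j k 0 + curvC Γ 1 j k 1

/-- Covariant derivative of the Ricci tensor for constant Christoffel symbols:
`ρ_{jk;i} = −Σ_m (Γ_{ij}{}^m ρ_{mk} + Γ_{ik}{}^m ρ_{jm})`. -/
def ricciCovC (Γ : Fin 2 → Fin 2 → Fin 2 → ℝ) (i j k : Fin 2) : ℝ :=
  -∑ m : Fin 2, (Γ i j m * ricciC Γ m k + Γ i k m * ricciC Γ j m)

/-- Torsion components `T^k = (1/2)(Γ_{12}{}^k − Γ_{21}{}^k)`. -/
def torC (Γ : Fin 2 → Fin 2 → Fin 2 → ℝ) (k : Fin 2) : ℝ :=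
  (1 / 2) * (Γ 0 1 k - Γ 1 0 k)

/-- Covariant derivative of the torsion for constant Christoffel symbols:
`T^k{}_{;i} = Σ_m Γ_{im}{}^k T^m − (Γ_{i1}{}^1 + Γ_{i2}{}^2) T^k`. -/
def torCovC (Γ : Fin 2 → Fin 2 → Fin 2 → ℝ) (i k : Fin 2) : ℝ :=
  (∑ m : Fin 2, Γ i m k * torC Γ m) - (Γ i 0 0 + Γ i 1 1) * torC Γ k

/-- The Type 𝒜 connection with `Γ_{11}{}^1 = ω`, `Γ_{12}{}^2 = ω`, `Γ_{21}{}^2 = ω − 2`,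
`Γ_{22}{}^1 = ε`, `Γ_{22}{}^2 = η`, all other symbols zero. -/
noncomputable def GammaFam6 (ω η ε : ℝ) : Fin 2 → Fin 2 → Fin 2 → ℝ :=
  fun i j k =>
    if i = 0 ∧ j = 0 ∧ k = 0 then ω
    else if i = 0 ∧ j = 1 ∧ k = 1 then ω
    else if i = 1 ∧ j = 0 ∧ k = 1 then ω - 2
    else if i = 1 ∧ j = 1 ∧ k = 0 then ε
    else if i = 1 ∧ j = 1 ∧ k = 1 then η
    else 0

/-- for this family (with `ε = ±1`): (a) the Ricci tensor vanishes
identically (hence is parallel); (b) `T¹ = 0`, `T² = 1`; (c) `T²{}_{;1} = −ω`,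
`T¹{}_{;2} = ε`, `T¹{}_{;1} = T²{}_{;2} = 0`; in particular the torsion is not
parallel. -/
theorem fam6_ricci_torsion (ω η ε : ℝ) (hε : ε = 1 ∨ ε = -1) :
    (∀ j k, ricciC (GammaFam6 ω η ε) j k = 0) ∧
    (torC (GammaFam6 ω η ε) 0 = 0 ∧ torC (GammaFam6 ω η ε) 1 = 1) ∧
    (torCovC (GammaFam6 ω η ε) 0 1 = -ω ∧ torCovC (GammaFam6 ω η ε) 1 0 = ε ∧
      torCovC (GammaFam6 ω η ε) 0 0 = 0 ∧ torCovC (GammaFam6 ω η ε) 1 1 = 0) ∧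
    (∃ i k, torCovC (GammaFam6 ω η ε) i k ≠ 0) := by
  have h1 : ε ≠ 0 := by rcases hε with h | h <;> rw [h] <;> norm_num
  refine ⟨?_, ⟨?_, ?_⟩, ⟨?_, ?_, ?_, ?_⟩, ⟨1, 0, ?_⟩⟩ <;>
    first
      | (intro j k; fin_cases j <;> fin_cases k <;>
          simp [ricciC, curvC, GammaFam6, Fin.sum_univ_two] <;> ring)
      | (simp [torCovC, torC, GammaFam6, Fin.sum_univ_two] <;> ring_nf <;> simp [h1])
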